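/- In the two-player perception game built on the 2×2×2×2 Bayesian game of Example 4 with uniform independent priors and privacy cost w satisfying w ≥ 0, w(1/2) = 0, and w(0) = w(1) = 1 + ε for some ε > 0, the pooling strategy profile σ with σ₁(u) = σ₁(d) = U and σ₂(ℓ) = σ₂(r) = L, together with perceptions τ₁(U) = τ₂(L) = 1/2 (the consistent on-path beliefs) and τ₁(D) = τ₂(R) = 0 (off-path beliefs), is a perception equilibrium, and it yields interim expected utilities 5 for types u and ℓ and 3 for types d and r — strictly greater than the interim utility 2.5 each type receives in the unique Bayesian Nash equilibrium of the underlying Bayesian game without privacy costs. -/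
import Mathlib


open Finset

/-- Player 1's material payoff in Example 4: type `true = u`, `false = d`; own
action `true = U`, `false = D`; opponent action `true = L`, `false = R`. -/
def vEx1 (t1 a1 a2 : Bool) : ℝ :=
  if t1 then (if a1 && a2 then 5 else 0)
  else (if a1 then (if a2 then 3 else 0) else (if a2 then 4 else 1))

/-- Player 2's material payoff: type `true = ℓ`, `false = r`; own action
`true = L`, `false = R`; opponent action `true = U`, `false = D`. -/
def vEx2 (t2 a2 a1 : Bool) : ℝ :=
  if t2 then (if a2 && a1 then 5 else 0)
  else (if a2 then (if a1 then 3 else 0) else (if a1 then 4 else 1))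

/-- Pooling strategies: both types of player 1 play `U`, both of player 2 play `L`. -/
def σP : Bool → Bool → ℝ := fun _ a => if a then 1 else 0

/-- Perceptions: probability that the player is of type `u` (resp. `ℓ`) after
each own action — `1/2` on the pooled action, `0` off path. -/
noncomputable def pEx : Bool → ℝ := fun a => if a then 1/2 else 0

/-- Interim expected utility of player 1 of type `t1` playing mixed action `s`,
including the privacy cost `w`. -/
noncomputable def pU1 (w : ℝ → ℝ) (t1 : Bool) (s : Bool → ℝ) : ℝ :=
  ∑ a1 : Bool, ∑ t2 : Bool, ∑ a2 : Bool,
    s a1 * (1/2) * σP t2 a2 * (vEx1 t1 a1 a2 - w (pEx a1))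

/-- Interim expected utility of player 2 of type `t2`. -/
noncomputable def pU2 (w : ℝ → ℝ) (t2 : Bool) (s : Bool → ℝ) : ℝ :=
  ∑ a2 : Bool, ∑ t1 : Bool, ∑ a1 : Bool,
    s a2 * (1/2) * σP t1 a1 * (vEx2 t2 a2 a1 - w (pEx a2))

/-- with privacy costs `w ≥ 0`, `w(1/2) = 0`, `w(0) = w(1) = 1+ε`,
the pooling profile (U,U;L,L) with perceptions `1/2` on path and `0` off path is
a perception equilibrium of the two-player perception game, yielding interim
utilities 5 and 3 — each strictly above the Bayesian Nash equilibrium value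
`2.5` of the underlying game without privacy costs. -/
theorem example4_pooling_perception_equilibrium
    (w : ℝ → ℝ) (hw0 : ∀ x, 0 ≤ x → x ≤ 1 → 0 ≤ w x)
    (hwhalf : w (1/2) = 0) (ε : ℝ) (hε : 0 < ε)
    (hw01 : w 0 = 1 + ε) (hw11 : w 1 = 1 + ε) :
    -- Bayesian consistency of the perceptions for each player
    (∀ a : Bool, 0 < ∑ t : Bool, (1/2 : ℝ) * σP t a →
      pEx a = ((1/2 : ℝ) * σP true a) / ∑ t : Bool, (1/2 : ℝ) * σP t a) ∧
    -- every type of each player best-replies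
    (∀ t1, ∀ s ∈ stdSimplex ℝ Bool, pU1 w t1 s ≤ pU1 w t1 (σP t1)) ∧
    (∀ t2, ∀ s ∈ stdSimplex ℝ Bool, pU2 w t2 s ≤ pU2 w t2 (σP t2)) ∧
    -- interim expected utilities
    pU1 w true (σP true) = 5 ∧ pU1 w false (σP false) = 3 ∧
    pU2 w true (σP true) = 5 ∧ pU2 w false (σP false) = 3 ∧
    (5 : ℝ) > 5/2 ∧ (3 : ℝ) > 5/2 := by
  have key : ∀ s : Bool → ℝ, ∀ t1,
      pU1 w t1 s = s true * (vEx1 t1 true true - w (1/2))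
        + s false * (vEx1 t1 false true - w 0) := by
    intro s t1
    simp [pU1, Fintype.sum_bool, σP, pEx]
    ring
  have key2 : ∀ s : Bool → ℝ, ∀ t2,
      pU2 w t2 s = s true * (vEx2 t2 true true - w (1/2))
        + s false * (vEx2 t2 false true - w 0) := by
    intro s t2
    simp [pU2, Fintype.sum_bool, σP, pEx]
    ring
  refine ⟨?_, ?_, ?_, ?_, ?_, ?_, ?_, by norm_num, by norm_num⟩
  · intro a ha
    cases a
    · simp [σP, pEx, Fintype.sum_bool] at ha
    · simp [σP, pEx, Fintype.sum_bool]
  · intro t1 s hs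
    obtain ⟨hnn, hsum⟩ := hs
    have h1 : s true + s false = 1 := by
      simpa [Fintype.sum_bool] using hsum
    rw [key s t1, key (σP t1) t1]
    have hnt := hnn true ; have hnf := hnn false
    cases t1 <;> simp [σP, vEx1, hwhalf, hw01] <;> nlinarith
  · intro t2 s hs
    obtain ⟨hnn, hsum⟩ := hs
    have h1 : s true + s false = 1 := by
      simpa [Fintype.sum_bool] using hsum
    rw [key2 s t2, key2 (σP t2) t2]
    have hnt := hnn true ; have hnf := hnn false
    cases t2 <;> simp [σP, vEx2, hwhalf, hw01] <;> nlinarith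
  · rw [key] ; simp [σP, vEx1, show w 2⁻¹ = 0 from by rw [← one_div]; exact hwhalf]
  · rw [key] ; simp [σP, vEx1, show w 2⁻¹ = 0 from by rw [← one_div]; exact hwhalf]
  · rw [key2] ; simp [σP, vEx2, show w 2⁻¹ = 0 from by rw [← one_div]; exact hwhalf]
  · rw [key2] ; simp [σP, vEx2, show w 2⁻¹ = 0 from by rw [← one_div]; exact hwhalf]
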